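/- For every k ≥ 1, all complex roots of the Euclid polynomial E_k are simple: there is no λ* ∈ ℂ with E_k(λ*) = 0 and E'_k(λ*) = 0. -/
import Mathlib


open Polynomial

noncomputable def euclidPolyC : ℕ → Polynomial ℂ
  | 0 => X + 1
  | k + 1 => euclidPolyC k * (euclidPolyC k - 1) + 1

lemma euclid_deriv (k : ℕ) :
    derivative (euclidPolyC (k + 1)) =
      derivative (euclidPolyC k) * (2 * euclidPolyC k - 1) := by
  show derivative (euclidPolyC k * (euclidPolyC k - 1) + 1) = _
  simp [derivative_mul]
  ring

lemma euclid_deriv_zero {k : ℕ} {z : ℂ}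
    (h : (derivative (euclidPolyC k)).eval z = 0) :
    ∃ j < k, (euclidPolyC j).eval z = 1/2 := by
  induction k with
  | zero => simp [euclidPolyC] at h
  | succ n ih =>
    rw [euclid_deriv, eval_mul] at h
    rcases mul_eq_zero.mp h with h1 | h2
    · obtain ⟨j, hj, hje⟩ := ih h1
      exact ⟨j, Nat.lt_succ_of_lt hj, hje⟩
    · refine ⟨n, Nat.lt_succ_self n, ?_⟩
      simp only [eval_sub, eval_mul, eval_ofNat, eval_one] at h2
      linear_combination h2 / 2

lemma euclid_real {j : ℕ} {z : ℂ} (h : (euclidPolyC j).eval z = 1/2) :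
    ∀ m, ∃ r : ℝ, (3/4 : ℝ) ≤ r ∧ (euclidPolyC (j + 1 + m)).eval z = (r : ℂ) := by
  intro m
  induction m with
  | zero =>
    refine ⟨3/4, le_refl _, ?_⟩
    show (euclidPolyC j * (euclidPolyC j - 1) + 1).eval z = _
    simp [h]
    norm_num
  | succ n ih =>
    obtain ⟨r, hr, he⟩ := ih
    refine ⟨r * (r - 1) + 1, ?_, ?_⟩
    · nlinarith
    · show (euclidPolyC (j+1+n) * (euclidPolyC (j+1+n) - 1) + 1).eval z = _
      rw [eval_add, eval_mul, eval_sub, eval_one, he]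
      push_cast
      ring

/-- All complex roots of every Euclid polynomial are simple: no common root of
`E_k` and `E'_k`. -/
theorem euclidPolyC_roots_simple (k : ℕ) :
    ¬ ∃ z : ℂ, (euclidPolyC k).eval z = 0 ∧ (derivative (euclidPolyC k)).eval z = 0 := by
  rintro ⟨z, h0, hd⟩
  obtain ⟨j, hjk, hje⟩ := euclid_deriv_zero hd
  obtain ⟨m, hm⟩ : ∃ m, k = j + 1 + m := ⟨k - (j+1), by omega⟩
  obtain ⟨r, hr, he⟩ := euclid_real hje m
  rw [hm, he] at h0
  have : r = 0 := by exact_mod_cast h0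
  linarith
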